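/- A set partition π of [n] (with first block B_1, i.e., the block containing 1) is splitable if and only if there exists an element i ∈ B_1 with 2 ≤ i ≤ n such that π = π_{[i-1]} ∘ (π_{[i,n]} − i + 1). -/

import Mathlib

/-- A block of a set partition: a finite set of positive integers. -/
abbrev Block : Type := Finset ℕ

/-- The underlying set of a list of blocks (the union of all blocks). -/
def support (P : List Block) : Finset ℕ := P.foldr (· ∪ ·) ∅

/-- `P` is a set partition of `[n] = {1,…,n}`: a list of pairwise disjoint nonempty
blocks with union `{1,…,n}`, listed in increasing order of their minimal elements. -/
def IsPartition (n : ℕ) (P : List Block) : Prop :=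
  (∀ B ∈ P, B.Nonempty) ∧ List.Pairwise Disjoint P ∧
    support P = Finset.Icc 1 n ∧
    List.Chain' (fun B C : Block => B.min < C.min) P

/-- Add `m` to every element of every block: `σ + m`. -/
def shiftUp (m : ℕ) (P : List Block) : List Block := P.map fun B => B.image (· + m)

/-- Subtract `m` from every element of every block. -/
def shiftDown (m : ℕ) (P : List Block) : List Block := P.map fun B => B.image (· - m)

/-- The slash product `π | σ` where `π` is a partition of `[m]`. -/
def slash (m : ℕ) (P Q : List Block) : List Block := P ++ shiftUp m Q

/-- `P` is an atomic partition of `[n]`: it is not a slash product of two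
nonempty partitions. -/
def Atomic (n : ℕ) (P : List Block) : Prop :=
  ¬ ∃ (a b : ℕ) (σ τ : List Block), 0 < a ∧ 0 < b ∧ a + b = n ∧
      IsPartition a σ ∧ IsPartition b τ ∧ P = slash a σ τ

/-- The split product `π ∘ σ` where `π` is a partition of `[m]`. -/
def splitProd (m : ℕ) (P Q : List Block) : List Block :=
  List.zipWith (· ∪ ·) P (shiftUp m Q) ++ P.drop Q.length ++ (shiftUp m Q).drop P.length

/-- `P` is a splitable partition of `[n]`: a split product of two nonempty partitions. -/
def Splitable (n : ℕ) (P : List Block) : Prop :=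
  ∃ (a b : ℕ) (σ τ : List Block), 0 < a ∧ 0 < b ∧ a + b = n ∧
      IsPartition a σ ∧ IsPartition b τ ∧ P = splitProd a σ τ

/-- The minimum of a block (`0` for the empty block). -/
def blockMin (B : Block) : ℕ := WithTop.untopD 0 B.min

/-- The restriction `π_S`: the nonempty intersections `B ∩ S`, listed in
increasing order of their minimal elements. -/
def restrict (P : List Block) (S : Finset ℕ) : List Block :=
  (((P.map (· ∩ S)).filter fun B => decide B.Nonempty).mergeSort
    fun B C => decide (blockMin B ≤ blockMin C))

/-- The blocks from position `d` on have union equal to an upper part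
`{x_t, x_{t+1}, …, x_n}` of the underlying set. -/
def IsUpperSuffix (P : List Block) (d : ℕ) : Prop :=
  ∃ s ∈ support P, support (P.drop d) = (support P).filter (s ≤ ·)

instance (P : List Block) : DecidablePred (IsUpperSuffix P) := fun d => by
  unfold IsUpperSuffix; infer_instance

/-- `R(π)`: the longest proper-or-improper final segment `{B_r,…,B_k}` of the blocks
whose union is an upper part `{x_t,…,x_n}` of the underlying set. -/
def Rmap (P : List Block) : List Block :=
  P.drop (WithBot.unbotD 0 (((Finset.range P.length).filter fun d => IsUpperSuffix P d).max))

/-- `π = π_{[i-1]} ∘ (π_{[i,n]} − i + 1)`. -/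
def SplitsAt (n i : ℕ) (P : List Block) : Prop :=
  P = splitProd (i - 1) (restrict P (Finset.Icc 1 (i - 1)))
        (shiftDown (i - 1) (restrict P (Finset.Icc i n)))

instance (n : ℕ) (P : List Block) : DecidablePred fun i => SplitsAt n i P := fun i => by
  unfold SplitsAt; infer_instance

/-- The index `i` in the definition of `φ`: the smallest element of the first block
`B_1` such that `π = π_{[i-1]} ∘ (π_{[i,n]} − i + 1)`. -/
def phiI (n : ℕ) (P : List Block) : ℕ :=
  WithTop.untopD 0 (((P.headD ∅).filter fun i => 2 ≤ i ∧ SplitsAt n i P).min)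

/-- The index `j` in the definition of `φ`: the smallest element of the underlying
set of `R(π_{[i,n]})`. -/
def phiJ (n : ℕ) (P : List Block) : ℕ :=
  WithTop.untopD 0 ((support (Rmap (restrict P (Finset.Icc (phiI n P) n)))).min)

/-- The map `φ`: `φ(π) = π_{[j-1]} | (π_{[j,n]} − j + 1)`. -/
def phi (n : ℕ) (P : List Block) : List Block :=
  slash (phiJ n P - 1) (restrict P (Finset.Icc 1 (phiJ n P - 1)))
    (shiftDown (phiJ n P - 1) (restrict P (Finset.Icc (phiJ n P) n)))

/-- `σ_{[j-1]} = σ_{[i-1]} ∘ (σ_{[i,j-1]} − i + 1)`. -/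
def SplitsAtRes (j i : ℕ) (P : List Block) : Prop :=
  restrict P (Finset.Icc 1 (j - 1)) =
    splitProd (i - 1) (restrict P (Finset.Icc 1 (i - 1)))
      (shiftDown (i - 1) (restrict P (Finset.Icc i (j - 1))))

instance (j : ℕ) (P : List Block) : DecidablePred fun i => SplitsAtRes j i P := fun i => by
  unfold SplitsAtRes; infer_instance

open scoped Classical in
/-- The map `ψ`. Here `j` is the smallest element of the underlying set of `R(σ)`,
`r` is the (0-based) position of the first block of `R(σ)`, and in the splitable case
`i` is the smallest element of `B_1` with `σ_{[j-1]} = σ_{[i-1]} ∘ (σ_{[i,j-1]} − i + 1)`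
and `q` is the (0-based) position of the first block contained in `[i-1]`. -/
noncomputable def psi (n : ℕ) (P : List Block) : List Block :=
  let j := WithTop.untopD 0 ((support (Rmap P)).min)
  if Splitable (j - 1) (restrict P (Finset.Icc 1 (j - 1))) then
    let i := WithTop.untopD 0 (((P.headD ∅).filter fun i => 2 ≤ i ∧ SplitsAtRes j i P).min)
    let q := P.findIdx fun B => decide (B ⊆ Finset.Icc 1 (i - 1))
    let r := P.length - (Rmap P).length
    P.take q ++ (List.zipWith (· ∪ ·) ((P.drop q).take (r - q)) (P.drop r)
      ++ ((P.drop q).take (r - q)).drop (P.drop r).length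
      ++ (P.drop r).drop (r - q))
  else
    splitProd (j - 1) (restrict P (Finset.Icc 1 (j - 1)))
      (shiftDown (j - 1) (restrict P (Finset.Icc j n)))

/-!
Every block of a split product `σ ∘ τ` (with `σ ∈ Π_a`, `τ ∈ Π_b`) is the union of at most one
block of `σ` and at most one block of `τ + a`, so restricting `σ ∘ τ` to `[a]` gives back `σ`
and restricting it to `[a + 1, a + b]` gives back `τ + a`; moreover `a + 1` lies in the first
block, since `1` lies in the first block of `τ`. Hence `i = a + 1` works. Conversely, the two
restrictions in `π = π_{[i-1]} ∘ (π_{[i,n]} − i + 1)` are set partitions of `[i - 1]` and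
(after the shift) of `[n - i + 1]`, so this equation exhibits `π` as a split product.
-/

lemma support_cons (B : Block) (P : List Block) : support (B :: P) = B ∪ support P := rfl

lemma mem_support {P : List Block} {x : ℕ} : x ∈ support P ↔ ∃ B ∈ P, x ∈ B := by
  induction P with
  | nil => simp [support]
  | cons B P ih => simp [support_cons, ih]

lemma support_map_image (f : ℕ → ℕ) (P : List Block) :
    support (P.map (·.image f)) = (support P).image f := by
  induction P with
  | nil => rfl
  | cons B P ih => simp [support_cons, ih, Finset.image_union]

lemma blockMin_eq_min' {B : Block} (hB : B.Nonempty) : blockMin B = B.min' hB := by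
  rw [blockMin, ← Finset.coe_min' hB]
  rfl

lemma blockMin_mem {B : Block} (hB : B.Nonempty) : blockMin B ∈ B := by
  rw [blockMin_eq_min' hB]
  exact B.min'_mem hB

lemma blockMin_le {B : Block} {x : ℕ} (hx : x ∈ B) : blockMin B ≤ x := by
  rw [blockMin_eq_min' ⟨x, hx⟩]
  exact B.min'_le x hx

lemma blockMin_image {f : ℕ → ℕ} (hf : Monotone f) {B : Block} (hB : B.Nonempty) :
    blockMin (B.image f) = f (blockMin B) := by
  rw [blockMin_eq_min' hB, blockMin_eq_min' (hB.image f), Finset.min'_image hf]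

lemma min_lt_min_iff_blockMin_lt {B C : Block} (hB : B.Nonempty) (hC : C.Nonempty) :
    B.min < C.min ↔ blockMin B < blockMin C := by
  rw [blockMin_eq_min' hB, blockMin_eq_min' hC, ← Finset.coe_min' hB, ← Finset.coe_min' hC,
    WithTop.coe_lt_coe]

lemma blockMin_lt_of_le_of_disjoint {B C : Block} (hB : B.Nonempty) (hC : C.Nonempty)
    (hle : blockMin B ≤ blockMin C) (hBC : Disjoint B C) : blockMin B < blockMin C :=
  hle.lt_of_ne fun h => Finset.disjoint_left.1 hBC (blockMin_mem hB) (h ▸ blockMin_mem hC)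

structure IsSetPartition (S : Finset ℕ) (P : List Block) : Prop where
  nonempty : ∀ B ∈ P, B.Nonempty
  pairwise_disjoint : P.Pairwise Disjoint
  support_eq : support P = S
  pairwise_blockMin_lt : P.Pairwise fun B C => blockMin B < blockMin C

lemma isPartition_iff_isSetPartition {n : ℕ} {P : List Block} :
    IsPartition n P ↔ IsSetPartition (Finset.Icc 1 n) P := by
  have chain_iff (hne : ∀ B ∈ P, B.Nonempty) :
      P.IsChain (fun B C => B.min < C.min) ↔ P.Pairwise fun B C => blockMin B < blockMin C := by
    rw [← List.pairwise_map (R := (· < ·)), ← List.isChain_iff_pairwise, List.isChain_map]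
    exact List.IsChain.iff_of_mem_imp fun B C hB hC =>
      min_lt_min_iff_blockMin_lt (hne B hB) (hne C hC)
  exact ⟨fun ⟨hne, hd, hs, hc⟩ => ⟨hne, hd, hs, (chain_iff hne).1 hc⟩,
    fun h => ⟨h.nonempty, h.pairwise_disjoint, h.support_eq, (chain_iff h.nonempty).2
      h.pairwise_blockMin_lt⟩⟩

namespace IsSetPartition

variable {S : Finset ℕ} {P : List Block}

lemma subset (hP : IsSetPartition S P) {B : Block} (hB : B ∈ P) : B ⊆ S :=
  hP.support_eq ▸ fun _ hx => mem_support.2 ⟨B, hB, hx⟩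

lemma mem_headD (hP : IsSetPartition S P) {x : ℕ} (hx : x ∈ S) (hmin : ∀ y ∈ S, x ≤ y) :
    x ∈ P.headD ∅ := by
  obtain ⟨B, hB, hxB⟩ := mem_support.1 (hP.support_eq ▸ hx)
  cases P with
  | nil => simp at hB
  | cons H P =>
    rcases List.mem_cons.1 hB with rfl | hB
    · exact hxB
    · have hHB := List.rel_of_pairwise_cons hP.pairwise_blockMin_lt hB
      have hH := hP.nonempty H List.mem_cons_self
      have hxH := hmin _ (hP.subset List.mem_cons_self (blockMin_mem hH))
      have hBx := blockMin_le hxB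
      omega

lemma map_image (hP : IsSetPartition S P) {f : ℕ → ℕ} (hf : Monotone f) (hinj : Set.InjOn f S) :
    IsSetPartition (S.image f) (P.map (·.image f)) where
  nonempty := by
    simpa using fun B hB => (hP.nonempty B hB).image f
  pairwise_disjoint := by
    refine List.pairwise_map.2 (hP.pairwise_disjoint.imp_of_mem fun hB hC hBC => ?_)
    rw [Finset.disjoint_left]
    intro _ hy hy'
    obtain ⟨x, hx, rfl⟩ := Finset.mem_image.1 hy
    obtain ⟨x', hx', hfx'⟩ := Finset.mem_image.1 hy'
    have := hinj (hP.subset hC hx') (hP.subset hB hx) hfx'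
    exact Finset.disjoint_left.1 hBC hx (this ▸ hx')
  support_eq := by rw [support_map_image, hP.support_eq]
  pairwise_blockMin_lt := by
    refine List.pairwise_map.2 (hP.pairwise_blockMin_lt.imp_of_mem fun hB hC hlt => ?_)
    have hB' := hP.nonempty _ hB
    have hC' := hP.nonempty _ hC
    rw [blockMin_image hf hB', blockMin_image hf hC']
    exact (hf hlt.le).lt_of_ne fun h => hlt.ne <|
      hinj (hP.subset hB (blockMin_mem hB')) (hP.subset hC (blockMin_mem hC')) h

lemma shiftUp (hP : IsSetPartition S P) (m : ℕ) :
    IsSetPartition (S.image (· + m)) (shiftUp m P) :=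
  hP.map_image (fun _ _ h => Nat.add_le_add_right h m) (add_left_injective m).injOn

lemma shiftDown (hP : IsSetPartition S P) {m : ℕ} (hS : ∀ x ∈ S, m ≤ x) :
    IsSetPartition (S.image (· - m)) (shiftDown m P) :=
  hP.map_image (fun _ _ h => Nat.sub_le_sub_right h m) fun x hx y hy h => by
    have hx' := hS x hx; have hy' := hS y hy; omega

end IsSetPartition

lemma mem_restrict {P : List Block} {S : Finset ℕ} {B : Block} :
    B ∈ restrict P S ↔ B.Nonempty ∧ ∃ B' ∈ P, B' ∩ S = B := by
  simp [restrict, and_comm]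

lemma pairwise_disjoint_restrict {P : List Block} (hP : P.Pairwise Disjoint) (S : Finset ℕ) :
    (restrict P S).Pairwise Disjoint := by
  have hsub : ((P.map (· ∩ S)).filter fun B => decide B.Nonempty).Pairwise Disjoint :=
    (hP.map _ fun _ _ h => h.mono inf_le_left inf_le_left).sublist List.filter_sublist
  exact hsub.perm (List.mergeSort_perm _ _).symm fun h => h.symm

lemma pairwise_blockMin_le_restrict (P : List Block) (S : Finset ℕ) :
    (restrict P S).Pairwise fun B C => blockMin B ≤ blockMin C := by
  simpa [restrict] using
    List.pairwise_mergeSort (le := fun B C : Block => decide (blockMin B ≤ blockMin C))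
    (fun _ _ _ h₁ h₂ => by simp only [decide_eq_true_eq] at *; omega)
    (fun _ _ => by simp only [Bool.or_eq_true, decide_eq_true_eq]; omega)
    ((P.map (· ∩ S)).filter fun B => decide B.Nonempty)

lemma IsSetPartition.restrict {T : Finset ℕ} {P : List Block} (hP : IsSetPartition T P)
    (S : Finset ℕ) : IsSetPartition (T ∩ S) (restrict P S) where
  nonempty _ hB := (mem_restrict.1 hB).1
  pairwise_disjoint := pairwise_disjoint_restrict hP.pairwise_disjoint S
  support_eq := by
    ext x
    simp only [mem_support, mem_restrict, ← hP.support_eq, Finset.mem_inter]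
    constructor
    · rintro ⟨_, ⟨-, B, hB, rfl⟩, hx⟩
      exact ⟨⟨B, hB, (Finset.mem_inter.1 hx).1⟩, (Finset.mem_inter.1 hx).2⟩
    · rintro ⟨⟨B, hB, hx⟩, hxS⟩
      exact ⟨B ∩ S, ⟨⟨x, Finset.mem_inter.2 ⟨hx, hxS⟩⟩, B, hB, rfl⟩, Finset.mem_inter.2 ⟨hx, hxS⟩⟩
  pairwise_blockMin_lt :=
    ((pairwise_blockMin_le_restrict P S).and (pairwise_disjoint_restrict hP.pairwise_disjoint S))
      |>.imp_of_mem fun hB hC ⟨hle, hBC⟩ => blockMin_lt_of_le_of_disjoint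
        (mem_restrict.1 hB).1 (mem_restrict.1 hC).1 hle hBC

def zipUnion (L M : List Block) : List Block :=
  List.zipWith (· ∪ ·) L M ++ L.drop M.length ++ M.drop L.length

@[simp] lemma zipUnion_nil_left (M : List Block) : zipUnion [] M = M := by simp [zipUnion]

@[simp] lemma zipUnion_nil_right (L : List Block) : zipUnion L [] = L := by simp [zipUnion]

@[simp] lemma zipUnion_cons_cons (B C : Block) (L M : List Block) :
    zipUnion (B :: L) (C :: M) = (B ∪ C) :: zipUnion L M := by simp [zipUnion]

lemma zipUnion_comm (L M : List Block) : zipUnion L M = zipUnion M L := by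
  induction L generalizing M with
  | nil => simp
  | cons B L ih => cases M <;> simp [ih, Finset.union_comm]

lemma headD_zipUnion (L M : List Block) : (zipUnion L M).headD ∅ = L.headD ∅ ∪ M.headD ∅ := by
  cases L <;> cases M <;> simp

lemma splitProd_eq_zipUnion (m : ℕ) (P Q : List Block) :
    splitProd m P Q = zipUnion P (shiftUp m Q) := by
  simp [splitProd, zipUnion, shiftUp]

lemma filter_nonempty_map_inter_zipUnion {S : Finset ℕ} {L M : List Block}
    (hL : ∀ B ∈ L, B.Nonempty ∧ B ⊆ S) (hM : ∀ C ∈ M, Disjoint C S) :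
    ((zipUnion L M).map (· ∩ S)).filter (fun B => decide B.Nonempty) = L := by
  induction L generalizing M with
  | nil =>
    simpa [List.filter_eq_nil_iff, Finset.not_nonempty_iff_eq_empty,
      ← Finset.disjoint_iff_inter_eq_empty]
  | cons B L ih =>
    cases M with
    | nil =>
      have hmap : (B :: L).map (· ∩ S) = B :: L := by
        conv_rhs => rw [← List.map_id (B :: L)]
        exact List.map_congr_left fun D hD => Finset.inter_eq_left.2 (hL D hD).2
      rw [zipUnion_nil_right, hmap, List.filter_eq_self]
      simpa using fun D hD => (hL D hD).1
    | cons C M =>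
      have hB := hL B List.mem_cons_self
      simp [Finset.union_inter_distrib_right, Finset.inter_eq_left.2 hB.2,
        Finset.disjoint_iff_inter_eq_empty.1 (hM C List.mem_cons_self), hB.1,
        ih (fun D hD => hL D (List.mem_cons_of_mem _ hD))
          fun D hD => hM D (List.mem_cons_of_mem _ hD)]

lemma restrict_zipUnion_left {S : Finset ℕ} {L M : List Block} (hL : IsSetPartition S L)
    (hM : Disjoint (support M) S) : restrict (zipUnion L M) S = L := by
  rw [restrict, filter_nonempty_map_inter_zipUnion (fun B hB => ⟨hL.nonempty B hB, hL.subset hB⟩)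
    fun C hC => hM.mono_left fun _ hx => mem_support.2 ⟨C, hC, hx⟩]
  exact List.mergeSort_of_pairwise (by simpa using hL.pairwise_blockMin_lt.imp le_of_lt)

lemma restrict_zipUnion_right {S : Finset ℕ} {L M : List Block} (hL : Disjoint (support L) S)
    (hM : IsSetPartition S M) : restrict (zipUnion L M) S = M := by
  rw [zipUnion_comm, restrict_zipUnion_left hM hL]

lemma shiftDown_shiftUp (m : ℕ) (P : List Block) : shiftDown m (shiftUp m P) = P := by
  simp [shiftDown, shiftUp, Finset.image_image, Function.comp_def]

/-- A set partition `π` of `[n]` (with first block `B_1`, the block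
containing `1`, i.e. the head of the list) is splitable if and only if there exists
`i ∈ B_1` with `2 ≤ i ≤ n` such that `π = π_{[i-1]} ∘ (π_{[i,n]} − i + 1)`. -/
theorem splitable_iff_exists_splitsAt (n : ℕ) (P : List Block) (hP : IsPartition n P) :
    Splitable n P ↔ ∃ i ∈ P.headD ∅, 2 ≤ i ∧ i ≤ n ∧ SplitsAt n i P := by
  rw [isPartition_iff_isSetPartition] at hP
  constructor
  · rintro ⟨a, b, σ, τ, ha, hb, rfl, hσ, hτ, hPστ⟩
    rw [isPartition_iff_isSetPartition] at hσ hτ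
    have hτa : IsSetPartition (Finset.Icc (a + 1) (a + b)) (shiftUp a τ) := by
      simpa [add_comm] using hτ.shiftUp a
    have hdisj : Disjoint (Finset.Icc 1 a) (Finset.Icc (a + 1) (a + b)) :=
      Finset.disjoint_left.2 fun x hx hx' => by
        simp only [Finset.mem_Icc] at hx hx'; omega
    have hleft : restrict P (Finset.Icc 1 a) = σ := by
      rw [hPστ, splitProd_eq_zipUnion, restrict_zipUnion_left hσ (hτa.support_eq ▸ hdisj.symm)]
    have hright : restrict P (Finset.Icc (a + 1) (a + b)) = shiftUp a τ := by
      rw [hPστ, splitProd_eq_zipUnion, restrict_zipUnion_right (hσ.support_eq ▸ hdisj) hτa]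
    refine ⟨a + 1, ?_, by omega, by omega, ?_⟩
    · rw [hPστ, splitProd_eq_zipUnion, headD_zipUnion]
      exact Finset.mem_union_right _
        (hτa.mem_headD (Finset.mem_Icc.2 ⟨le_rfl, by omega⟩) fun y hy => (Finset.mem_Icc.1 hy).1)
    · rw [SplitsAt, Nat.add_sub_cancel, hleft, hright, shiftDown_shiftUp]
      exact hPστ
  · rintro ⟨i, -, h2i, hin, hsplit⟩
    refine ⟨i - 1, n - (i - 1), _, _, by omega, by omega, by omega, ?_, ?_, hsplit⟩
    · rw [isPartition_iff_isSetPartition]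
      convert hP.restrict (Finset.Icc 1 (i - 1)) using 1
      ext
      simp only [Finset.mem_Icc, Finset.mem_inter]
      omega
    · rw [isPartition_iff_isSetPartition]
      have hge : ∀ x ∈ Finset.Icc 1 n ∩ Finset.Icc i n, i - 1 ≤ x := fun x hx => by
        simp only [Finset.mem_Icc, Finset.mem_inter] at hx; omega
      convert (hP.restrict (Finset.Icc i n)).shiftDown hge using 1
      ext y
      simp only [Finset.mem_Icc, Finset.mem_image, Finset.mem_inter]
      exact ⟨fun hy => ⟨y + (i - 1), by omega, by omega⟩, fun ⟨x, hx, hxy⟩ => by omega⟩
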